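/- arXiv:2512.24616 — 2 statements merged into one kernel-verified Lean document; each statement's English description precedes it below -/
import Mathlib

section
/- For λ₁ ∈ (0,1] and λ₂ ∈ [0,1] with λ₂' = √(1−λ₂²), the integral over the circle ∫₀¹ ln|λ₁(λ₂ cos(2πθ) + i λ₂')| dθ equals ln(λ₁(1+λ₂')/2). -/
/-!
Write `b = √(1 - λ₂²)`. On the unit circle `z = e^{it}` one has `2z cos t = z² + 1`, and
`λ₂² + b² = 1` factors the resulting quadratic:
`2(1 + b) z (λ₂ cos t + i b) = (λ₂ z + i(1 + b)) ((1 + b) z - i λ₂)`.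
Since `|z| = 1`, the integral is therefore the logarithmic Mahler measure of
`λ₁ / (2(1 + b))` times this quadratic. By Jensen's formula the Mahler measure of a linear
polynomial `a z + β` is `max |a| |β|`, which is `1 + b` for both factors, giving
`|λ₁| (1 + b) / 2`.
-/

open Real Complex Polynomial intervalIntegral

theorem Polynomial.mahlerMeasure_C_mul_X_add_C_eq_max (a b : ℂ) :
    (C a * X + C b).mahlerMeasure = max ‖a‖ ‖b‖ := by
  rcases eq_or_ne a 0 with rfl | ha
  · simp [mahlerMeasure_const]
  · exact mahlerMeasure_C_mul_X_add_C ha b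

theorem circleAverage_eq_integral_circleMap_two_pi_mul {E : Type*} [NormedAddCommGroup E]
    [NormedSpace ℝ E] (f : ℂ → E) (c : ℂ) (R : ℝ) :
    circleAverage f c R = ∫ θ in (0:ℝ)..1, f (circleMap c R (2 * π * θ)) := by
  rw [circleAverage_def, integral_comp_mul_left (fun t ↦ f (circleMap c R t)) two_pi_pos.ne',
    mul_zero, mul_one]

noncomputable def rhoPoly (p q : ℝ) : ℂ[X] :=
  (C (p : ℂ) * X + C (I * (1 + q : ℝ))) * (C ((1 + q : ℝ) : ℂ) * X + C (-(I * p)))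

theorem eval_circleMap_rhoPoly {p q : ℝ} (h : p ^ 2 + q ^ 2 = 1) (t : ℝ) :
    (rhoPoly p q).eval (circleMap 0 1 t) =
      2 * (1 + q : ℝ) * circleMap 0 1 t * (((p * Real.cos t : ℝ) : ℂ) + I * (q : ℂ)) := by
  have h' : (p : ℂ) ^ 2 + (q : ℂ) ^ 2 = 1 := by exact_mod_cast h
  have hinv : circleMap 0 1 t * exp (-(t * I)) = 1 := by
    rw [circleMap_zero, ofReal_one, one_mul, ← Complex.exp_add, add_neg_cancel, Complex.exp_zero]
  have hcos : Complex.cos t = (circleMap 0 1 t + exp (-(t * I))) / 2 := by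
    rw [Complex.cos, circleMap_zero, ofReal_one, one_mul, neg_mul]
  simp only [rhoPoly, eval_mul, eval_add, eval_C, eval_X]
  push_cast
  rw [hcos]
  linear_combination (-(I * circleMap 0 1 t)) * h' - p * (1 + q) * hinv - p * (1 + q) * I_sq

theorem mahlerMeasure_rhoPoly {p q : ℝ} (hp : |p| ≤ 1 + q) :
    (rhoPoly p q).mahlerMeasure = (1 + q) ^ 2 := by
  have h1q : 0 ≤ 1 + q := (abs_nonneg p).trans hp
  simp only [rhoPoly, mahlerMeasure_mul, mahlerMeasure_C_mul_X_add_C_eq_max, norm_neg, norm_mul,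
    Complex.norm_I, one_mul, Complex.norm_real, Real.norm_eq_abs, abs_of_nonneg h1q]
  rw [max_eq_right (by linarith), max_eq_left (by linarith), sq]

open Real in
theorem log_integral_rho_general (lam1 lam2 : ℝ)
    (h₂ : 0 ≤ lam2) (h₂' : lam2 ≤ 1) :
    ∫ θ in (0:ℝ)..1,
        Real.log (‖(lam1 : ℂ) *
          (((lam2 * Real.cos (2 * π * θ) : ℝ) : ℂ) +
            Complex.I * ((Real.sqrt (1 - lam2 ^ 2) : ℝ) : ℂ))‖)
      = Real.log (lam1 * (1 + Real.sqrt (1 - lam2 ^ 2)) / 2) := by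
  set b := Real.sqrt (1 - lam2 ^ 2)
  have hb : lam2 ^ 2 + b ^ 2 = 1 := by rw [Real.sq_sqrt (by nlinarith)]; ring
  have hb0 : 0 ≤ b := Real.sqrt_nonneg _
  set P : ℂ[X] := C ((lam1 / (2 * (1 + b)) : ℝ) : ℂ) * rhoPoly lam2 b
  have heval : ∀ t : ℝ, ‖P.eval (circleMap 0 1 t)‖ =
      ‖(lam1 : ℂ) * (((lam2 * Real.cos t : ℝ) : ℂ) + I * (b : ℂ))‖ := by
    intro t
    rw [eval_mul, eval_C, eval_circleMap_rhoPoly hb, ← mul_assoc, ← mul_assoc]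
    simp only [norm_mul, Complex.norm_real, Real.norm_eq_abs, norm_circleMap_zero, abs_one,
      mul_one, Complex.norm_ofNat]
    rw [abs_div, abs_mul, abs_two, abs_of_nonneg (by linarith : 0 ≤ 1 + b)]
    field_simp
  have hM : P.mahlerMeasure = |lam1 * (1 + b) / 2| := by
    rw [mahlerMeasure_mul, mahlerMeasure_const,
      mahlerMeasure_rhoPoly (by rw [abs_of_nonneg h₂]; linarith),
      Complex.norm_real, Real.norm_eq_abs, abs_div, abs_div, abs_mul, abs_mul, abs_two,
      abs_of_nonneg (by linarith : 0 ≤ 1 + b)]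
    field_simp
  calc _ = ∫ θ in (0:ℝ)..1, Real.log ‖P.eval (circleMap 0 1 (2 * π * θ))‖ := by
        simp_rw [heval]
    _ = P.logMahlerMeasure := by
        rw [logMahlerMeasure_def, circleAverage_eq_integral_circleMap_two_pi_mul]
    _ = _ := by rw [logMahlerMeasure_eq_log_MahlerMeasure, hM, Real.log_abs]

open Real in
/-- `∫₀¹ ln|lam1(lam2 cos(2πθ) + i lam2')| dθ = ln(lam1(1+lam2')/2)`. -/
theorem log_integral_rho (lam1 lam2 : ℝ) (h₁ : 0 < lam1) (h₁' : lam1 ≤ 1)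
    (h₂ : 0 ≤ lam2) (h₂' : lam2 ≤ 1) :
    ∫ θ in (0:ℝ)..1,
        Real.log (‖(lam1 : ℂ) *
          (((lam2 * Real.cos (2 * π * θ) : ℝ) : ℂ) +
            Complex.I * ((Real.sqrt (1 - lam2 ^ 2) : ℝ) : ℂ))‖)
      = Real.log (lam1 * (1 + Real.sqrt (1 - lam2 ^ 2)) / 2) :=
  log_integral_rho_general lam1 lam2 h₂ h₂'
end

section
/- Let ω be irrational with convergents p_n/q_n and fix ε > 0 with q_{n+1} ≥ e^{ε q_n}. Let x, x' be integers with 0 < |x − x'| < 2 q_n, and let t be an integer with 0 ≤ t q_n ≤ 10 q_{n+1}^{1−ε}. Then for n sufficiently large, ‖(x − x')/2 · ω − t q_n ω‖ ≥ 1/(3 q_n), assuming x − x' is even. -/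
/-- The `n`-th continued fraction denominator `q_n` of `ω`. -/
noncomputable def cfDen (ω : ℝ) (n : ℕ) : ℝ := (GenContFract.of ω).dens n

/-- Distance from a real number to the nearest integer. -/
noncomputable def distZ (x : ℝ) : ℝ := ‖(x : UnitAddCircle)‖

/-!
Write `k = (x - x')/2`, so `0 < |k| < q_n`. As `p_n, q_n` are coprime and
`|q_n ω - p_n| ≤ 1/q_{n+1}`, the integer `k p_n - m q_n` (with `m` nearest to `kω`) is nonzero,
whence `q_n ‖kω‖ ≥ 1 - |k|/q_{n+1} ≥ 2/3` as soon as `q_{n+1} ≥ 3 q_n`. On the other side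
`‖t q_n ω‖ ≤ t/q_{n+1} ≤ 10 q_n⁻¹ q_{n+1}^{-ε} ≤ 1/(3 q_n)` as soon as `q_{n+1}^ε ≥ 30`.
Since `q_n → ∞`, both size conditions follow from `q_{n+1} ≥ e^{ε q_n}` for large `n`.
-/

open Filter Real

namespace GenContFract

variable {K : Type*} [Field K] [LinearOrder K] [FloorRing K]

theorem exists_int_eq_contsAux (v : K) (n : ℕ) :
    ∃ a b : ℤ, (GenContFract.of v).contsAux n = ⟨a, b⟩ := by
  induction n using Nat.twoStepInduction with
  | zero => exact ⟨1, 0, by simp [zeroth_contAux_eq_one_zero]⟩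
  | one => exact ⟨⌊v⌋, 1, by simp [first_contAux_eq_h_one, of_h_eq_floor]⟩
  | more n ih₀ ih₁ =>
    obtain ⟨a₀, b₀, h₀⟩ := ih₀
    obtain ⟨a₁, b₁, h₁⟩ := ih₁
    cases hs : (GenContFract.of v).s.get? n with
    | none => exact ⟨a₁, b₁, (contsAux_stable_step_of_terminated hs).trans h₁⟩
    | some gp =>
      obtain ⟨ha, z, hz⟩ := of_partNum_eq_one_and_exists_int_partDen_eq hs
      exact ⟨z * a₁ + a₀, z * b₁ + b₀, by rw [contsAux_recurrence hs h₀ h₁]; simp [ha, hz]⟩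

theorem exists_int_eq_nums_and_dens (v : K) (n : ℕ) :
    ∃ p q : ℤ, (GenContFract.of v).nums n = p ∧ (GenContFract.of v).dens n = q := by
  obtain ⟨p, q, h⟩ := exists_int_eq_contsAux v (n + 1)
  exact ⟨p, q, by rw [num_eq_conts_a, nth_cont_eq_succ_nth_contAux, h],
    by rw [den_eq_conts_b, nth_cont_eq_succ_nth_contAux, h]⟩

end GenContFract

open GenContFract

namespace Irrational

variable {ω : ℝ}

theorem genContFract_not_terminatedAt (hω : Irrational ω) (n : ℕ) :
    ¬(GenContFract.of ω).TerminatedAt n := fun h ↦ by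
  obtain ⟨q, hq⟩ := exists_rat_eq_of_terminates ⟨n, h⟩
  exact hω ⟨q, hq.symm⟩

theorem tendsto_cfDen_atTop (hω : Irrational ω) : Tendsto (cfDen ω) atTop atTop := by
  refine tendsto_atTop_mono (fun n ↦ ?_) tendsto_natCast_atTop_atTop
  calc (n : ℝ) ≤ Nat.fib (n + 1) := by
        exact_mod_cast (by linarith [Nat.le_fib_add_one (n + 1)] : n ≤ Nat.fib (n + 1))
    _ ≤ cfDen ω n := succ_nth_fib_le_of_nth_den (Or.inr (hω.genContFract_not_terminatedAt _))

theorem exists_isCoprime_abs_cfDen_mul_sub_le (hω : Irrational ω) (n : ℕ) :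
    ∃ p q : ℤ, cfDen ω n = q ∧ IsCoprime p q ∧ |q * ω - p| ≤ 1 / cfDen ω (n + 1) := by
  obtain ⟨p, q, hp, hq⟩ := exists_int_eq_nums_and_dens ω n
  obtain ⟨p', q', hp', hq'⟩ := exists_int_eq_nums_and_dens ω (n + 1)
  have hdet : p * q' - q * p' = (-1) ^ (n + 1) := by
    have := SimpContFract.determinant (s := .of ω) (hω.genContFract_not_terminatedAt n)
    have hdetℝ : (p * q' - q * p' : ℝ) = (-1) ^ (n + 1) := by rwa [← hp, ← hq, ← hp', ← hq']
    exact_mod_cast hdetℝ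
  have hsq : ((-1 : ℤ) ^ (n + 1)) ^ 2 = 1 := by
    rw [← pow_mul, mul_comm, pow_mul, neg_one_sq, one_pow]
  have hcop : IsCoprime p q :=
    ⟨(-1) ^ (n + 1) * q', -(-1) ^ (n + 1) * p', by linear_combination (-1) ^ (n + 1) * hdet + hsq⟩
  have hq0 : 0 < (q : ℝ) := by
    have hfib := succ_nth_fib_le_of_nth_den (v := ω) (n := n)
      (Or.inr (hω.genContFract_not_terminatedAt _))
    rw [hq] at hfib
    exact lt_of_lt_of_le (by exact_mod_cast Nat.fib_pos.2 n.succ_pos) hfib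
  refine ⟨p, q, hq, hcop, ?_⟩
  have happrox := abs_sub_convs_le (hω.genContFract_not_terminatedAt n)
  rw [conv_eq_num_div_den, hp, hq] at happrox
  calc |q * ω - p| = q * |ω - p / q| := by
        rw [← abs_of_pos hq0, ← abs_mul, abs_of_pos hq0, mul_sub, mul_div_cancel₀ _ hq0.ne']
    _ ≤ q * (1 / (q * cfDen ω (n + 1))) := by gcongr; exact happrox
    _ = 1 / cfDen ω (n + 1) := by field_simp

end Irrational

theorem distZ_le_abs_sub_intCast (y : ℝ) (m : ℤ) : distZ y ≤ |y - m| := by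
  rw [distZ, UnitAddCircle.norm_eq]
  exact round_le y m

theorem distZ_intCast_mul_le (k : ℤ) (y : ℝ) : distZ (k * y) ≤ |(k : ℝ)| * distZ y := by
  rw [distZ, distZ, ← zsmul_eq_mul, AddCircle.coe_zsmul, ← Int.norm_eq_abs]
  exact norm_zsmul_le _ _

theorem distZ_sub_distZ_le (a b : ℝ) : distZ a - distZ b ≤ distZ (a - b) := by
  rw [distZ, distZ, distZ, AddCircle.coe_sub]
  exact norm_sub_norm_le _ _

theorem one_sub_le_mul_distZ {p q k : ℤ} (hpq : IsCoprime p q) (hk : k ≠ 0) (hkq : |k| < q)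
    (ω : ℝ) : 1 - |(k : ℝ)| * |q * ω - p| ≤ q * distZ (k * ω) := by
  set m := round (k * ω)
  have hkpmq : k * p - m * q ≠ 0 := by
    intro h
    have hqk : q ∣ k := hpq.symm.dvd_of_dvd_mul_right ⟨m, by linear_combination h⟩
    exact (Int.le_of_dvd (abs_pos.2 hk) ((dvd_abs q k).2 hqk)).not_gt hkq
  have hone : (1 : ℝ) ≤ |((k * p - m * q : ℤ) : ℝ)| := by exact_mod_cast Int.one_le_abs hkpmq
  have hq0 : (0 : ℝ) < q := by exact_mod_cast (abs_nonneg k).trans_lt hkq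
  calc 1 - |(k : ℝ)| * |q * ω - p| ≤ |((k * p - m * q : ℤ) : ℝ)| - |(k : ℝ) * (q * ω - p)| := by
        rw [abs_mul]; linarith
    _ ≤ |(q : ℝ) * (k * ω - m)| := by
        rw [← abs_neg ((k : ℝ) * (q * ω - p))]
        refine (abs_sub_abs_le_abs_sub _ _).trans_eq (congrArg abs ?_)
        push_cast; ring
    _ = q * distZ (k * ω) := by rw [abs_mul, abs_of_pos hq0, distZ, UnitAddCircle.norm_eq]

theorem one_div_three_mul_le_distZ_sub {p q k t : ℤ} {ω q' ε : ℝ} (hpq : IsCoprime p q)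
    (happrox : |q * ω - p| ≤ 1 / q') (hqq' : 3 * q ≤ q') (hq'ε : 30 ≤ q' ^ ε) (hk : k ≠ 0)
    (hkq : |k| < q) (ht : 0 ≤ t) (htq : t * q ≤ 10 * q' ^ (1 - ε)) :
    1 / (3 * q) ≤ distZ (k * ω - t * q * ω) := by
  have hq0 : (0 : ℝ) < q := by exact_mod_cast (abs_nonneg k).trans_lt hkq
  have hq'0 : 0 < q' := by linarith
  have hkω : 2 / 3 ≤ q * distZ (k * ω) := by
    have hkq' : |(k : ℝ)| * |q * ω - p| ≤ q * (1 / q') := by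
      gcongr
      exact_mod_cast hkq.le
    have hratio : (q : ℝ) * (1 / q') ≤ 1 / 3 := by
      rw [mul_one_div, div_le_iff₀ hq'0]; linarith
    linarith [one_sub_le_mul_distZ hpq hk hkq ω]
  have htqω : q * distZ (t * q * ω) ≤ 1 / 3 := by
    have htq' : (t : ℝ) * q ≤ q' / 3 := by
      rw [rpow_sub hq'0, rpow_one] at htq
      calc (t : ℝ) * q ≤ 10 * (q' / q' ^ ε) := htq
        _ ≤ q' / 3 := by
          rw [mul_div_assoc', div_le_div_iff₀ (by positivity) (by norm_num)]
          nlinarith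
    have ht0 : (0 : ℝ) ≤ t := by exact_mod_cast ht
    calc q * distZ (t * q * ω) = q * distZ (t * (q * ω)) := by rw [mul_assoc]
      _ ≤ q * (|(t : ℝ)| * |q * ω - p|) := by
          gcongr
          exact (distZ_intCast_mul_le t _).trans (by gcongr; exact distZ_le_abs_sub_intCast _ p)
      _ ≤ q * (t * (1 / q')) := by rw [abs_of_nonneg ht0]; gcongr
      _ = (t * q) / q' := by ring
      _ ≤ 1 / 3 := by rw [div_le_iff₀ hq'0]; linarith
  have htri := distZ_sub_distZ_le (k * ω) (t * q * ω)
  rw [div_le_iff₀ (by positivity)]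
  nlinarith

theorem eventually_three_mul_le_exp_mul {ε : ℝ} (hε : 0 < ε) :
    ∀ᶠ x in atTop, 3 * x ≤ exp (ε * x) := by
  filter_upwards [(isLittleO_pow_exp_pos_mul_atTop 1 hε).bound (by norm_num : (0 : ℝ) < 1 / 3),
    eventually_ge_atTop 0] with x hx hx0
  rw [pow_one, Real.norm_of_nonneg hx0, Real.norm_of_nonneg (exp_pos _).le] at hx
  linarith

/-- For `n` large, in a strong Liouville scale, if `0 < |x − x'| < 2 q_n` with `x − x'`
even and `0 ≤ t q_n ≤ 10 q_{n+1}^{1−ε}`, then `‖(x−x')/2 · ω − t q_n ω‖ ≥ 1/(3 q_n)`. -/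
theorem small_divisor_lower_bound (ω : ℝ) (hω : Irrational ω) (ε : ℝ) (hε : 0 < ε) :
    ∃ N : ℕ, ∀ n ≥ N,
      Real.exp (ε * cfDen ω n) ≤ cfDen ω (n + 1) →
      ∀ x x' : ℤ, x ≠ x' → (|x - x'| : ℝ) < 2 * cfDen ω n → Even (x - x') →
      ∀ t : ℤ, 0 ≤ t → (t : ℝ) * cfDen ω n ≤ 10 * cfDen ω (n + 1) ^ (1 - ε) →
      distZ (((x : ℝ) - (x' : ℝ)) / 2 * ω - (t : ℝ) * cfDen ω n * ω)
        ≥ 1 / (3 * cfDen ω n) := by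
  have hexp : ∀ᶠ y in atTop, 30 ≤ exp (ε * y * ε) :=
    (tendsto_exp_atTop.comp <|
      (tendsto_id.const_mul_atTop hε).atTop_mul_const hε).eventually_ge_atTop 30
  obtain ⟨N, hN⟩ := eventually_atTop.1 <|
    hω.tendsto_cfDen_atTop.eventually ((eventually_three_mul_le_exp_mul hε).and hexp)
  refine ⟨N, fun n hn hLiou x x' hne hlt heven t ht htq => ?_⟩
  obtain ⟨hq3, hq30⟩ := hN n hn
  obtain ⟨p, q, hqn, hpq, happrox⟩ := hω.exists_isCoprime_abs_cfDen_mul_sub_le n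
  obtain ⟨r, hr⟩ := heven
  have hxr : ((x : ℝ) - x') = 2 * r := by exact_mod_cast (by omega : x - x' = 2 * r)
  have hr0 : r ≠ 0 := by omega
  rw [hqn] at hq3 hq30 hLiou hlt htq ⊢
  rw [hxr, mul_div_cancel_left₀ _ two_ne_zero]
  refine one_div_three_mul_le_distZ_sub hpq happrox (hq3.trans hLiou) ?_ hr0 ?_ ht htq
  · rw [exp_mul] at hq30
    exact hq30.trans (rpow_le_rpow (exp_pos _).le hLiou hε.le)
  · rw [hxr, abs_mul, abs_two] at hlt
    exact_mod_cast (by linarith : (|r| : ℝ) < q)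
end
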